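/- arXiv:2602.23196 — 2 statements merged into one kernel-verified Lean document; each statement's English description precedes it below -/
import Mathlib

section
/- For every positive integer k, there exists a finite simple graph that is triangle-free and admits a proper 3-coloring, containing k+1 pairwise distinct vertices u, s₁, …, s_k such that the set {u, s₁, …, s_k} is an independent set and every proper 3-coloring c of the graph satisfies c(u) = c(s₁) = ⋯ = c(s_k). -/
/-!
The Grötzsch graph, the Mycielskian of `C₅`, is triangle-free but not 3-colourable. Deleting the
edge between its hub `u` and a shadow vertex `s` leaves a 3-colourable graph in which every
3-colouring gives `u` and `s` the same colour, since otherwise it would also colour the Grötzsch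
graph. Gluing `k` copies of this gadget along `u` gives the required graph: folding the copies
onto one is a homomorphism, which pulls back triangle-freeness, 3-colourability and the
independence of `{u, s}`, while each copy embeds, so each copy of `s` gets the colour of `u`.
-/

namespace SimpleGraph

variable {V W : Type*} {G : SimpleGraph V}

theorem CliqueFree.of_hom {H : SimpleGraph W} {n : ℕ} (f : G →g H) (h : H.CliqueFree n) :
    G.CliqueFree n := by
  contrapose h
  rw [not_cliqueFree_iff_top_isContained] at h ⊢
  obtain ⟨c⟩ := h
  exact ⟨(f.comp c.toHom).toCopy (Hom.injective_of_top_hom _)⟩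

def Coloring.toSupEdge {α : Type*} {u v : V} (c : G.Coloring α) (h : c u ≠ c v) :
    (G ⊔ edge u v).Coloring α :=
  Coloring.mk c fun {x y} hxy => by
    rcases hxy with hxy | hxy
    · exact c.valid hxy
    · rw [edge_adj] at hxy
      obtain ⟨rfl, rfl⟩ | ⟨rfl, rfl⟩ := hxy.1
      exacts [h, h.symm]

theorem Coloring.eq_of_not_colorable_sup_edge {n : ℕ} {u v : V}
    (h : ¬ (G ⊔ edge u v).Colorable n) (c : G.Coloring (Fin n)) : c u = c v :=
  by_contra fun huv => h ⟨c.toSupEdge huv⟩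

/-- `some (false, v)` is `v`, `some (true, v)` is its shadow and `none` is the hub. -/
def mycielskian (G : SimpleGraph V) : SimpleGraph (Option (Bool × V)) where
  Adj
    | some (b, v), some (b', w) => (b && b') = false ∧ G.Adj v w
    | some (b, _), none | none, some (b, _) => b = true
    | none, none => False
  symm := ⟨by
    rintro (_ | ⟨b, v⟩) (_ | ⟨b', w⟩) h
    · exact h
    · exact h
    · exact h
    · exact ⟨by rw [Bool.and_comm]; exact h.1, h.2.symm⟩⟩
  loopless := ⟨by
    rintro (_ | ⟨b, v⟩) h
    · exact h
    · exact G.loopless.irrefl v h.2⟩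

instance [DecidableEq V] [DecidableRel G.Adj] : DecidableRel G.mycielskian.Adj
  | some (_, _), some (_, _) => inferInstanceAs (Decidable (_ ∧ _))
  | some (_, _), none => inferInstanceAs (Decidable (_ = true))
  | none, some (_, _) => inferInstanceAs (Decidable (_ = true))
  | none, none => inferInstanceAs (Decidable False)

theorem cliqueFree_three_iff :
    G.CliqueFree 3 ↔ ∀ x y z, G.Adj x y → G.Adj x z → ¬ G.Adj y z := by
  classical
  refine ⟨fun h x y z hxy hxz hyz => h {x, y, z} (is3Clique_triple_iff.2 ⟨hxy, hxz, hyz⟩),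
    fun h t ht => ?_⟩
  obtain ⟨x, y, z, hxy, hxz, hyz, -⟩ := is3Clique_iff.1 ht
  exact h x y z hxy hxz hyz

theorem mycielskian_cliqueFree_three (h : G.CliqueFree 3) : G.mycielskian.CliqueFree 3 := by
  rw [cliqueFree_three_iff] at h ⊢
  rintro (_ | ⟨b₁, x⟩) (_ | ⟨b₂, y⟩) (_ | ⟨b₃, z⟩) hxy hxz hyz
  -- A triangle avoiding the hub projects to `G`; the hub's neighbours are non-adjacent shadows.
  case some.some.some => exact h x y z hxy.2 hxz.2 hyz.2
  all_goals simp_all [mycielskian]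

theorem Colorable.of_mycielskian {n : ℕ} (h : G.mycielskian.Colorable (n + 1)) :
    G.Colorable n := by
  obtain ⟨c⟩ := h
  set a := c none
  have hshadow (v : V) : c (some (true, v)) ≠ a := c.valid (w := none) rfl
  -- Vertices coloured like the hub take the colour of their shadow instead.
  let d (v : V) : {x // x ≠ a} :=
    if hv : c (some (false, v)) = a then ⟨_, hshadow v⟩ else ⟨_, hv⟩
  have hd {v w : V} (hvw : G.Adj v w) : d v ≠ d w := by
    intro heq
    simp only [d] at heq
    split_ifs at heq with hv hw hw
    · exact c.valid (v := some (false, v)) (w := some (false, w)) ⟨rfl, hvw⟩ (hv.trans hw.symm)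
    · exact c.valid (v := some (true, v)) (w := some (false, w)) ⟨rfl, hvw⟩
        (congrArg Subtype.val heq)
    · exact c.valid (v := some (false, v)) (w := some (true, w)) ⟨rfl, hvw⟩
        (congrArg Subtype.val heq)
    · exact c.valid (v := some (false, v)) (w := some (false, w)) ⟨rfl, hvw⟩
        (congrArg Subtype.val heq)
  simpa using (Coloring.mk d hd).colorable

section Bouquet

variable [DecidableEq V] (u : V) {ι : Type*}

/-- In the copies of `V` glued at `u`, `none` is the shared vertex `u` and `some (i, v)` is `v`
in copy `i`. -/
def bouquetIncl (i : ι) (v : V) : Option (ι × {v // v ≠ u}) :=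
  if h : v = u then none else some (i, ⟨v, h⟩)

def bouquetFold : Option (ι × {v // v ≠ u}) → V
  | none => u
  | some (_, v) => v

theorem bouquetFold_incl (i : ι) (v : V) : bouquetFold u (bouquetIncl u i v) = v := by
  unfold bouquetIncl
  split_ifs with h
  exacts [h.symm, rfl]

theorem bouquetIncl_self (i : ι) : bouquetIncl u i u = none := dif_pos rfl

theorem bouquetIncl_injective (i : ι) : Function.Injective (bouquetIncl u i) :=
  Function.LeftInverse.injective (bouquetFold_incl u i)

theorem bouquetIncl_ne_none {v : V} (hv : v ≠ u) (i : ι) : bouquetIncl u i v ≠ none := by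
  simp [bouquetIncl, hv]

theorem bouquetIncl_left_injective {v : V} (hv : v ≠ u) :
    Function.Injective fun i : ι => bouquetIncl u i v := by
  intro i j hij
  simpa [bouquetIncl, hv] using hij

variable (G ι) in
def bouquet : SimpleGraph (Option (ι × {v // v ≠ u})) := ⨆ i, G.map (bouquetIncl u i)

def bouquetInclHom (i : ι) : G →g G.bouquet u ι where
  toFun := bouquetIncl u i
  map_rel' {v w} h := iSup_adj.2 ⟨i, (bouquetIncl_injective u i).ne h.ne, v, w, h, rfl, rfl⟩

def bouquetFoldHom : G.bouquet u ι →g G where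
  toFun := bouquetFold u
  map_rel' {x y} h := by
    obtain ⟨i, -, v, w, hvw, rfl, rfl⟩ := iSup_adj.1 h
    simpa only [bouquetFold_incl] using hvw

theorem bouquet_coloring_eq {α : Type*} {s : V} (hs : ∀ c : G.Coloring α, c s = c u)
    (c : (G.bouquet u ι).Coloring α) (i : ι) : c (bouquetIncl u i s) = c none := by
  rw [← bouquetIncl_self u i]
  exact hs (c.comp (bouquetInclHom u i))

theorem bouquet_not_adj {s : V} (hs : ¬ G.Adj u s) :
    ∀ a ∈ insert none (Set.range fun i : ι => bouquetIncl u i s),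
    ∀ b ∈ insert none (Set.range fun i : ι => bouquetIncl u i s),
      ¬ (G.bouquet u ι).Adj a b := by
  have hfold : ∀ a ∈ insert none (Set.range fun i : ι => bouquetIncl u i s),
      bouquetFold u a = u ∨ bouquetFold u a = s := by
    rintro _ (rfl | ⟨i, rfl⟩)
    exacts [Or.inl rfl, Or.inr (bouquetFold_incl u i s)]
  intro a ha b hb hab
  have := (bouquetFoldHom (G := G) u).map_adj hab
  rcases hfold a ha with ha | ha <;> rcases hfold b hb with hb | hb <;>
    simp only [bouquetFoldHom, RelHom.coeFn_mk, ha, hb] at this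
  exacts [this.ne rfl, hs this, hs this.symm, this.ne rfl]

end Bouquet

def grotzschGraph : SimpleGraph (Option (Bool × Fin 5)) := (cycleGraph 5).mycielskian

theorem grotzschGraph_cliqueFree : grotzschGraph.CliqueFree 3 :=
  mycielskian_cliqueFree_three (cliqueFree_three_iff.2 (by decide))

theorem grotzschGraph_not_colorable : ¬ grotzschGraph.Colorable 3 := fun h => by
  have := h.of_mycielskian
  rw [← chromaticNumber_le_iff_colorable,
    chromaticNumber_cycleGraph_of_odd 5 (by norm_num) (by decide)] at this
  exact absurd this (by decide)

def equalityGadget : SimpleGraph (Option (Bool × Fin 5)) :=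
  grotzschGraph \ edge none (some (true, 0))

theorem equalityGadget_cliqueFree : equalityGadget.CliqueFree 3 :=
  grotzschGraph_cliqueFree.anti sdiff_le

theorem equalityGadget_colorable : equalityGadget.Colorable 3 := by
  -- A vertex and its shadow share a colour from a colouring of `C₅` using `2` only at `0`, so
  -- the hub can take colour `2`.
  let g : Fin 5 → Fin 3 := ![2, 0, 1, 0, 1]
  have hg : ∀ v w, (cycleGraph 5).Adj v w → g v ≠ g w := by decide
  have hg0 : ∀ v, v ≠ 0 → g v ≠ 2 := by decide
  refine ⟨Coloring.mk (fun | none => 2 | some (_, v) => g v) ?_⟩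
  rintro (_ | ⟨b, v⟩) (_ | ⟨b', w⟩) ⟨hadj, hne⟩
  · exact hadj.elim
  · obtain rfl : b' = true := hadj
    have hw : w ≠ 0 := by rintro rfl; simp [edge_adj] at hne
    exact (hg0 w hw).symm
  · obtain rfl : b = true := hadj
    have hv : v ≠ 0 := by rintro rfl; simp [edge_adj] at hne
    exact hg0 v hv
  · exact hg v w hadj.2

theorem equalityGadget_not_adj : ¬ equalityGadget.Adj none (some (true, 0)) := by
  simp [equalityGadget, edge_adj]

theorem equalityGadget_coloring_eq (c : equalityGadget.Coloring (Fin 3)) :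
    c (some (true, 0)) = c none := by
  refine (c.eq_of_not_colorable_sup_edge fun h => grotzschGraph_not_colorable ?_).symm
  refine h.mono_left ?_
  rw [equalityGadget, sdiff_sup_self]
  exact le_sup_left

end SimpleGraph

open SimpleGraph

theorem generalized_equality_gadget_exists_general (k : ℕ) :
    ∃ (W : Type) (_ : Fintype W) (G : SimpleGraph W) (u : W) (s : Fin k → W),
      G.CliqueFree 3 ∧ G.Colorable 3 ∧
      Function.Injective s ∧ (∀ i, s i ≠ u) ∧
      (∀ a ∈ insert u (Set.range s), ∀ b ∈ insert u (Set.range s), ¬ G.Adj a b) ∧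
      ∀ c : G.Coloring (Fin 3), ∀ i, c (s i) = c u := by
  have hs : (some (true, 0) : Option (Bool × Fin 5)) ≠ none := Option.some_ne_none _
  exact ⟨_, inferInstance, equalityGadget.bouquet none (Fin k), none,
    fun i => bouquetIncl none i (some (true, 0)),
    equalityGadget_cliqueFree.of_hom (bouquetFoldHom none),
    equalityGadget_colorable.of_hom (bouquetFoldHom none),
    bouquetIncl_left_injective none hs, bouquetIncl_ne_none none hs,
    bouquet_not_adj none equalityGadget_not_adj,
    bouquet_coloring_eq none equalityGadget_coloring_eq⟩

/-- **Generalized equality gadget `EQ_{u,S}`.** For every positive integer `k`, there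
exists a finite simple graph that is triangle-free and admits a proper 3-coloring,
containing `k+1` pairwise distinct vertices `u, s 0, …, s (k-1)` forming an independent
set, such that every proper 3-coloring `c` satisfies `c (s i) = c u` for all `i`. -/
theorem generalized_equality_gadget_exists (k : ℕ) (hk : 0 < k) :
    ∃ (W : Type) (_ : Fintype W) (G : SimpleGraph W) (u : W) (s : Fin k → W),
      G.CliqueFree 3 ∧ G.Colorable 3 ∧
      Function.Injective s ∧ (∀ i, s i ≠ u) ∧
      (∀ a ∈ insert u (Set.range s), ∀ b ∈ insert u (Set.range s), ¬ G.Adj a b) ∧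
      ∀ c : G.Coloring (Fin 3), ∀ i, c (s i) = c u :=
  generalized_equality_gadget_exists_general k
end

section
/- For every positive integer t, let B be the balanced blowup of the 9-cycle with parts of size t: the vertex set is {0,…,8} × {1,…,t}, and (i,a) is adjacent to (j,b) if and only if j ≡ i+1 (mod 9) or j ≡ i−1 (mod 9); color each vertex (i,a) with the color i mod 3 ∈ {0,1,2}. Let D be the 6-cycle on vertices 0,…,5 (with k adjacent to k±1 mod 6), colored by assigning vertex k the color k mod 3. Then: (i) the coloring of B is a proper 3-coloring, B has exactly 9t² edges, and (ii) B contains no colored copy of the colored 6-cycle D, i.e., there is no injective graph homomorphism φ from the 6-cycle to B mapping each vertex k to a vertex of color k mod 3. -/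
/-!
Going along the 6-cycle, consecutive vertices have colors `k` and `k + 1` (mod 3). In the blowup
a vertex over `i` has neighbours only over `i ± 1`, whose colors are `i ± 1` (mod 3) because
`3 ∣ 9`; so the color forces every step of the image to go from `i` to `i + 1`. After six steps
the image would return to its start, giving `6 = 0` in `ZMod 9`.
-/

open SimpleGraph

/-- The balanced blowup of the 9-cycle with parts of size `t`: vertices are pairs
`(i, a)` with `i : ZMod 9` and `a : Fin t`, and `(i, a)` is adjacent to `(j, b)` iff
`j ≡ i + 1` or `j ≡ i - 1` (mod 9). -/
def blowupC9 (t : ℕ) : SimpleGraph (ZMod 9 × Fin t) where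
  Adj p q := q.1 = p.1 + 1 ∨ q.1 = p.1 - 1
  symm := by
    constructor
    rintro ⟨i, a⟩ ⟨j, b⟩ h
    have h' : j = i + 1 ∨ j = i - 1 := h
    clear h
    show i = j + 1 ∨ i = j - 1
    revert h'; revert i j; decide
  loopless := by
    constructor
    rintro ⟨i, a⟩ h
    have h' : i = i + 1 ∨ i = i - 1 := h
    clear h
    revert h'; revert i; decide

instance (t : ℕ) : DecidableRel (blowupC9 t).Adj := fun p q =>
  inferInstanceAs (Decidable (q.1 = p.1 + 1 ∨ q.1 = p.1 - 1))

/-- The coloring of the blowup: vertex `(i, a)` gets color `i mod 3`. -/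
def blowupColoring (t : ℕ) (p : ZMod 9 × Fin t) : Fin 3 :=
  ⟨p.1.val % 3, Nat.mod_lt _ (by norm_num)⟩

/-- The coloring of the 6-cycle: vertex `k` gets color `k mod 3`. -/
def c6Coloring (k : Fin 6) : Fin 3 := ⟨k.val % 3, Nat.mod_lt _ (by norm_num)⟩

lemma blowupC9_adj_iff {t : ℕ} {p q : ZMod 9 × Fin t} :
    (blowupC9 t).Adj p q ↔ q.1 = p.1 + 1 ∨ q.1 = p.1 - 1 :=
  Iff.rfl

lemma blowupColoring_ne_of_adj {t : ℕ} {p q : ZMod 9 × Fin t} (h : (blowupC9 t).Adj p q) :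
    blowupColoring t p ≠ blowupColoring t q := by
  rw [blowupC9_adj_iff] at h
  simp only [blowupColoring, ne_eq, Fin.mk.injEq]
  generalize p.1 = i, q.1 = j at h ⊢
  revert i j; decide

lemma blowupC9_neighborFinset {t : ℕ} (p : ZMod 9 × Fin t) :
    (blowupC9 t).neighborFinset p = ({p.1 + 1, p.1 - 1} : Finset (ZMod 9)) ×ˢ Finset.univ := by
  ext q
  simp [blowupC9_adj_iff, Finset.mem_product]

lemma blowupC9_degree {t : ℕ} (p : ZMod 9 × Fin t) : (blowupC9 t).degree p = 2 * t := by
  have hne : p.1 + 1 ≠ p.1 - 1 := by generalize p.1 = i; revert i; decide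
  rw [← card_neighborFinset_eq_degree, blowupC9_neighborFinset, Finset.card_product,
    Finset.card_pair hne, Finset.card_univ, Fintype.card_fin]

lemma blowupC9_card_edgeFinset (t : ℕ) : (blowupC9 t).edgeFinset.card = 9 * t ^ 2 := by
  have hsum := sum_degrees_eq_twice_card_edges (blowupC9 t)
  simp only [blowupC9_degree, Finset.sum_const, Finset.card_univ, Fintype.card_prod,
    ZMod.card, Fintype.card_fin, smul_eq_mul] at hsum
  linarith

lemma eq_add_one_of_adj_of_mod_three {i j : ZMod 9} (k : Fin 6) (h : j = i + 1 ∨ j = i - 1)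
    (hi : i.val % 3 = k.val % 3) (hj : j.val % 3 = (k + 1).val % 3) : j = i + 1 := by
  revert h hi hj; revert k i j; decide

open Fin.NatCast in
lemma not_exists_colored_hom_cycleGraph_six (t : ℕ) :
    ¬ ∃ φ : cycleGraph 6 →g blowupC9 t, ∀ k, blowupColoring t (φ k) = c6Coloring k := by
  rintro ⟨φ, hφ⟩
  have hcolor (k : Fin 6) : (φ k).1.val % 3 = k.val % 3 := by
    simpa [blowupColoring, c6Coloring, Fin.ext_iff] using hφ k
  have hstep (k : Fin 6) : (φ (k + 1)).1 = (φ k).1 + 1 :=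
    eq_add_one_of_adj_of_mod_three k (φ.map_adj (by simp [cycleGraph_adj']))
      (hcolor k) (hcolor (k + 1))
  have hwalk (n : ℕ) : (φ (n : Fin 6)).1 = (φ 0).1 + n := by
    induction n with
    | zero => simp
    | succ n ih => push_cast; rw [hstep, ih, add_assoc]
  have hsix : (φ 0).1 = (φ 0).1 + 6 := by simpa using hwalk 6
  exact absurd (left_eq_add.mp hsix) (by decide)

theorem blowupC9_colored_C6_free_general (t : ℕ) :
    (∀ p q, (blowupC9 t).Adj p q → blowupColoring t p ≠ blowupColoring t q) ∧
    (blowupC9 t).edgeFinset.card = 9 * t ^ 2 ∧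
    ¬ ∃ φ : SimpleGraph.cycleGraph 6 →g blowupC9 t,
        Function.Injective φ ∧ ∀ k : Fin 6, blowupColoring t (φ k) = c6Coloring k := by
  refine ⟨fun _ _ ↦ blowupColoring_ne_of_adj, blowupC9_card_edgeFinset t, ?_⟩
  rintro ⟨φ, -, hφ⟩
  exact not_exists_colored_hom_cycleGraph_six t ⟨φ, hφ⟩

/-- The coloring of the `C₉`-blowup is a proper 3-coloring, the blowup has exactly
`9 t²` edges, and it contains no colored copy of the colored 6-cycle (where vertex `k`
of the 6-cycle has color `k mod 3`). -/
theorem blowupC9_colored_C6_free (t : ℕ) (ht : 0 < t) :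
    (∀ p q, (blowupC9 t).Adj p q → blowupColoring t p ≠ blowupColoring t q) ∧
    (blowupC9 t).edgeFinset.card = 9 * t ^ 2 ∧
    ¬ ∃ φ : SimpleGraph.cycleGraph 6 →g blowupC9 t,
        Function.Injective φ ∧ ∀ k : Fin 6, blowupColoring t (φ k) = c6Coloring k :=
  blowupC9_colored_C6_free_general t
end
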